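/- For every f ∈ L¹(Ω,μ) and every n ≥ 1, the function f_n = ϱ_n ⋄ f belongs to D(T_max), and T_max f_n is given by (T_max f_n)(x) = −∫_0^{τ−(x)} ϱ_n'(s) f(Φ(x,−s)) ds for x ∈ Ω. -/

import Mathlib

open MeasureTheory Set Filter Topology
open scoped ENNReal NNReal

noncomputable section

/-- Forward exit time of the flow `Φ` from `Ω` (`∞` if the forward curve never leaves `Ω`). -/
def tauP {N : ℕ} (Ω : Set (Fin N → ℝ)) (Φ : (Fin N → ℝ) → ℝ → (Fin N → ℝ))
    (x : Fin N → ℝ) : ℝ≥0∞ :=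
  sInf {s : ℝ≥0∞ | ∃ r : ℝ, 0 < r ∧ s = ENNReal.ofReal r ∧ Φ x r ∉ Ω}

/-- Backward exit time of the flow `Φ` from `Ω`. -/
def tauM {N : ℕ} (Ω : Set (Fin N → ℝ)) (Φ : (Fin N → ℝ) → ℝ → (Fin N → ℝ))
    (x : Fin N → ℝ) : ℝ≥0∞ :=
  sInf {s : ℝ≥0∞ | ∃ r : ℝ, 0 < r ∧ s = ENNReal.ofReal r ∧ Φ x (-r) ∉ Ω}

/-- `∫_0^τ g(s) ds`, over `(0,∞)` when `τ = ∞`. -/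
def curveInt (g : ℝ → ℝ) (τ : ℝ≥0∞) : ℝ :=
  ∫ s in {s : ℝ | 0 < s ∧ ENNReal.ofReal s < τ}, g s

/-- The incoming part `Γ₋` of the boundary `∂Ω`. -/
def GammaM {N : ℕ} (Ω : Set (Fin N → ℝ)) (Φ : (Fin N → ℝ) → ℝ → (Fin N → ℝ)) :
    Set (Fin N → ℝ) :=
  {y ∈ frontier Ω | ∃ x ∈ Ω, tauM Ω Φ x < ⊤ ∧ y = Φ x (-(tauM Ω Φ x).toReal)}

/-- The outgoing part `Γ₊` of the boundary `∂Ω`. -/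
def GammaP {N : ℕ} (Ω : Set (Fin N → ℝ)) (Φ : (Fin N → ℝ) → ℝ → (Fin N → ℝ)) :
    Set (Fin N → ℝ) :=
  {y ∈ frontier Ω | ∃ x ∈ Ω, tauP Ω Φ x < ⊤ ∧ y = Φ x ((tauP Ω Φ x).toReal)}

/-- The boundary measures `μ∓` satisfy the integration-along-characteristics identities. -/
def IsBoundaryMeasures {N : ℕ} (Ω : Set (Fin N → ℝ)) (Φ : (Fin N → ℝ) → ℝ → (Fin N → ℝ))
    (μ μm μp : Measure (Fin N → ℝ)) : Prop :=
  ∀ f : (Fin N → ℝ) → ℝ, Integrable f (μ.restrict Ω) →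
    (∫ x in {x ∈ Ω | tauM Ω Φ x < ⊤}, f x ∂μ
        = ∫ y in GammaM Ω Φ, curveInt (fun s => f (Φ y s)) (tauP Ω Φ y) ∂μm) ∧
    (∫ x in {x ∈ Ω | tauP Ω Φ x < ⊤}, f x ∂μ
        = ∫ y in GammaP Ω Φ, curveInt (fun s => f (Φ y (-s))) (tauM Ω Φ y) ∂μp)

/-- The identities of Lemma `defmu+-` (beals1 and beals2). -/
def BealsProperty {N : ℕ} (Ω : Set (Fin N → ℝ)) (Φ : (Fin N → ℝ) → ℝ → (Fin N → ℝ))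
    (μ μm μp : Measure (Fin N → ℝ)) : Prop :=
  ∀ T : ℝ, 0 < T → ∀ f : ((Fin N → ℝ) × ℝ) → ℝ,
    Integrable f ((μ.restrict Ω).prod (volume.restrict (Ioo (0 : ℝ) T))) →
    (∫ p, f p ∂((μ.restrict Ω).prod (volume.restrict (Ioo (0 : ℝ) T)))
        = (∫ t in Ioo (0 : ℝ) T, (∫ y in GammaP Ω Φ,
            (∫ s in Ioo (0 : ℝ) ((tauM Ω Φ y ⊓ ENNReal.ofReal t).toReal),
              f (Φ y (-s), t - s)) ∂μp))
          + ∫ x in Ω, (∫ s in Ioo (0 : ℝ) ((tauM Ω Φ x ⊓ ENNReal.ofReal T).toReal),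
              f (Φ x (-s), T - s)) ∂μ)
    ∧ (∫ p, f p ∂((μ.restrict Ω).prod (volume.restrict (Ioo (0 : ℝ) T)))
        = (∫ t in Ioo (0 : ℝ) T, (∫ y in GammaM Ω Φ,
            (∫ s in Ioo (0 : ℝ) ((tauP Ω Φ y ⊓ ENNReal.ofReal (T - t)).toReal),
              f (Φ y s, t + s)) ∂μm))
          + ∫ x in Ω, (∫ s in Ioo (0 : ℝ) ((tauP Ω Φ x ⊓ ENNReal.ofReal T).toReal),
              f (Φ x s, s)) ∂μ)

/-- The class `𝔜` of test functions, together with the derivative `Dψ` along the flow. -/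
structure IsTestFun {N : ℕ} (Ω : Set (Fin N → ℝ)) (Φ : (Fin N → ℝ) → ℝ → (Fin N → ℝ))
    (ψ Dψ : (Fin N → ℝ) → ℝ) : Prop where
  measurable : Measurable ψ
  bounded : ∃ C, ∀ x, |ψ x| ≤ C
  compact_support : ∃ K : Set (Fin N → ℝ), IsCompact K ∧ K ⊆ Ω ∧ ∀ x ∉ K, ψ x = 0
  smooth : ∀ x ∈ Ω, ContDiffOn ℝ 1 (fun s => ψ (Φ x s))
      {s : ℝ | ENNReal.ofReal s < tauP Ω Φ x ∧ ENNReal.ofReal (-s) < tauM Ω Φ x}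
  hasDeriv : ∀ x ∈ Ω, HasDerivAt (fun s => ψ (Φ x s)) (Dψ x) 0
  measurableD : Measurable Dψ
  boundedD : ∃ C, ∀ x, |Dψ x| ≤ C

/-- `f ∈ D(T_max)` with `T_max f = g`. -/
def InDomTmax {N : ℕ} (Ω : Set (Fin N → ℝ)) (Φ : (Fin N → ℝ) → ℝ → (Fin N → ℝ))
    (μ : Measure (Fin N → ℝ)) (f g : (Fin N → ℝ) → ℝ) : Prop :=
  Integrable f (μ.restrict Ω) ∧ Integrable g (μ.restrict Ω) ∧
    ∀ ψ Dψ : (Fin N → ℝ) → ℝ, IsTestFun Ω Φ ψ Dψ →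
      ∫ x in Ω, g x * ψ x ∂μ = ∫ x in Ω, f x * Dψ x ∂μ

/-- A sequence of one-dimensional mollifiers supported in `[0, 1/n]`. -/
def IsMollifier (ρ : ℕ → ℝ → ℝ) : Prop :=
  ∀ n : ℕ, ContDiff ℝ (⊤ : ℕ∞) (ρ n) ∧ (∀ s, 0 ≤ ρ n s) ∧
    (∀ s, s ∉ Icc (0 : ℝ) (1 / (n + 1 : ℝ)) → ρ n s = 0) ∧ (∫ s, ρ n s) = 1

/-- Mollification along the characteristic curves. -/
def moll {N : ℕ} (Ω : Set (Fin N → ℝ)) (Φ : (Fin N → ℝ) → ℝ → (Fin N → ℝ))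
    (ρ : ℝ → ℝ) (f : (Fin N → ℝ) → ℝ) (x : Fin N → ℝ) : ℝ :=
  curveInt (fun s => ρ s * f (Φ x (-s))) (tauM Ω Φ x)

/-- The lifted flow `Ψ(ξ,s) = (Φ(ξ₁,s), ξ₂+s)` on `Ω × (0,T)`. -/
def lflow {N : ℕ} (Φ : (Fin N → ℝ) → ℝ → (Fin N → ℝ)) (ξ : (Fin N → ℝ) × ℝ) (s : ℝ) :
    (Fin N → ℝ) × ℝ := (Φ ξ.1 s, ξ.2 + s)

/-- Forward exit time `ℓ₊` of the lifted flow. -/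
def ellP {N : ℕ} (Ω : Set (Fin N → ℝ)) (Φ : (Fin N → ℝ) → ℝ → (Fin N → ℝ)) (T : ℝ)
    (ξ : (Fin N → ℝ) × ℝ) : ℝ≥0∞ := tauP Ω Φ ξ.1 ⊓ ENNReal.ofReal (T - ξ.2)

/-- Backward exit time `ℓ₋` of the lifted flow. -/
def ellM {N : ℕ} (Ω : Set (Fin N → ℝ)) (Φ : (Fin N → ℝ) → ℝ → (Fin N → ℝ))
    (ξ : (Fin N → ℝ) × ℝ) : ℝ≥0∞ := tauM Ω Φ ξ.1 ⊓ ENNReal.ofReal ξ.2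

/-- The incoming part `Σ₋,T` of the boundary of `Ω × (0,T)`. -/
def SigmaM {N : ℕ} (Ω : Set (Fin N → ℝ)) (Φ : (Fin N → ℝ) → ℝ → (Fin N → ℝ)) (T : ℝ) :
    Set ((Fin N → ℝ) × ℝ) :=
  {ζ ∈ frontier (Ω ×ˢ Ioo (0 : ℝ) T) |
    ∃ ξ ∈ Ω ×ˢ Ioo (0 : ℝ) T, ζ = lflow Φ ξ (-(ellM Ω Φ ξ).toReal)}

/-- The outgoing part `Σ₊,T` of the boundary of `Ω × (0,T)`. -/
def SigmaP {N : ℕ} (Ω : Set (Fin N → ℝ)) (Φ : (Fin N → ℝ) → ℝ → (Fin N → ℝ)) (T : ℝ) :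
    Set ((Fin N → ℝ) × ℝ) :=
  {ζ ∈ frontier (Ω ×ˢ Ioo (0 : ℝ) T) |
    ∃ ξ ∈ Ω ×ˢ Ioo (0 : ℝ) T, ζ = lflow Φ ξ ((ellP Ω Φ T ξ).toReal)}

/-- The semigroup `U₀(t)` with no re-entry boundary conditions. -/
def U0 {N : ℕ} (Ω : Set (Fin N → ℝ)) (Φ : (Fin N → ℝ) → ℝ → (Fin N → ℝ)) (t : ℝ)
    (f : (Fin N → ℝ) → ℝ) (x : Fin N → ℝ) : ℝ :=
  if ENNReal.ofReal t < tauM Ω Φ x then f (Φ x (-t)) else 0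

/-- `x ↦ ∫_0^{τ₋(x)} e^{-λ t} g(Φ(x,-t)) dt`. -/
def resolv {N : ℕ} (Ω : Set (Fin N → ℝ)) (Φ : (Fin N → ℝ) → ℝ → (Fin N → ℝ)) (lam : ℝ)
    (g : (Fin N → ℝ) → ℝ) (x : Fin N → ℝ) : ℝ :=
  curveInt (fun t => Real.exp (-(lam * t)) * g (Φ x (-t))) (tauM Ω Φ x)

/-- The candidate solution of the boundary value problem `(λ - T_max) f = g`, `B⁻ f = u`. -/
def bvpSol {N : ℕ} (Ω : Set (Fin N → ℝ)) (Φ : (Fin N → ℝ) → ℝ → (Fin N → ℝ)) (lam : ℝ)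
    (g u : (Fin N → ℝ) → ℝ) (x : Fin N → ℝ) : ℝ :=
  resolv Ω Φ lam g x +
    (if tauM Ω Φ x < ⊤ then
      Real.exp (-(lam * (tauM Ω Φ x).toReal)) * u (Φ x (-(tauM Ω Φ x).toReal)) else 0)

/-- `f` has incoming trace `u` on `Γ₋`, via an absolutely continuous representative
(along the characteristics, with derivative `-g`). -/
def IsTraceM {N : ℕ} (Ω : Set (Fin N → ℝ)) (Φ : (Fin N → ℝ) → ℝ → (Fin N → ℝ))
    (μ μm : Measure (Fin N → ℝ)) (f g u : (Fin N → ℝ) → ℝ) : Prop :=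
  ∃ fs : (Fin N → ℝ) → ℝ, fs =ᵐ[μ.restrict Ω] f ∧
    (∀ᵐ x ∂μ.restrict Ω, ∀ t₁ t₂ : ℝ, t₁ ≤ t₂ →
      ENNReal.ofReal (-t₁) < tauM Ω Φ x → ENNReal.ofReal t₂ < tauP Ω Φ x →
      fs (Φ x t₁) - fs (Φ x t₂) = ∫ s in t₁..t₂, g (Φ x s)) ∧
    ∀ᵐ y ∂μm.restrict (GammaM Ω Φ),
      Tendsto (fun t => fs (Φ y t)) (𝓝[>] (0 : ℝ)) (𝓝 (u y))

/-- `f` has outgoing trace `w` on `Γ₊`. -/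
def IsTraceP {N : ℕ} (Ω : Set (Fin N → ℝ)) (Φ : (Fin N → ℝ) → ℝ → (Fin N → ℝ))
    (μ μp : Measure (Fin N → ℝ)) (f g w : (Fin N → ℝ) → ℝ) : Prop :=
  ∃ fs : (Fin N → ℝ) → ℝ, fs =ᵐ[μ.restrict Ω] f ∧
    (∀ᵐ x ∂μ.restrict Ω, ∀ t₁ t₂ : ℝ, t₁ ≤ t₂ →
      ENNReal.ofReal (-t₁) < tauM Ω Φ x → ENNReal.ofReal t₂ < tauP Ω Φ x →
      fs (Φ x t₁) - fs (Φ x t₂) = ∫ s in t₁..t₂, g (Φ x s)) ∧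
    ∀ᵐ y ∂μp.restrict (GammaP Ω Φ),
      Tendsto (fun t => fs (Φ y (-t))) (𝓝[>] (0 : ℝ)) (𝓝 (w y))



section flowAux
variable {N : ℕ} {κ : ℝ≥0} {F : (Fin N → ℝ) → (Fin N → ℝ)}
  {Φ : (Fin N → ℝ) → ℝ → (Fin N → ℝ)}

private lemma flow_unique (hF : LipschitzWith κ F) {f g : ℝ → Fin N → ℝ}
    (hf : ∀ t, HasDerivAt f (F (f t)) t) (hg : ∀ t, HasDerivAt g (F (g t)) t)
    (h0 : f 0 = g 0) : f = g := by
  funext t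
  have h1 : (0:ℝ) < |t| + 1 := by positivity
  have hb : t ∈ Icc (-(|t|+1)) (|t|+1) :=
    ⟨by nlinarith [neg_abs_le t], by nlinarith [le_abs_self t]⟩
  exact ODE_solution_unique_of_mem_Icc (v := fun _ => F) (s := fun _ _ => True)
    (fun _ _ => hF.lipschitzOnWith) (t₀ := 0) ⟨by linarith, h1⟩
    (fun u _ => (hf u).continuousAt.continuousWithinAt)
    (fun u _ => hf u) (fun _ _ => trivial)
    (fun u _ => (hg u).continuousAt.continuousWithinAt)
    (fun u _ => hg u) (fun _ _ => trivial) h0 hb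

private lemma flow_group (hF : LipschitzWith κ F) (hΦ0 : ∀ x, Φ x 0 = x)
    (hΦ' : ∀ x s, HasDerivAt (Φ x) (F (Φ x s)) s) :
    ∀ x s t, Φ (Φ x s) t = Φ x (s + t) := by
  intro x s t
  have hg : ∀ u : ℝ, HasDerivAt (fun u => Φ x (s + u)) (F (Φ x (s + u))) u := by
    intro u
    have h1 : HasDerivAt (fun u : ℝ => s + u) 1 u := by
      simpa using (hasDerivAt_id u).const_add s
    simpa [Function.comp_def] using (hΦ' x (s+u)).scomp u h1
  have := flow_unique hF (f := fun u => Φ (Φ x s) u) (g := fun u => Φ x (s + u))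
    (fun u => hΦ' (Φ x s) u) hg (by simp [hΦ0])
  exact congrFun this t

private lemma flow_rev_deriv (hΦ' : ∀ x s, HasDerivAt (Φ x) (F (Φ x s)) s) (x : Fin N → ℝ)
    (s : ℝ) : HasDerivAt (fun u => Φ x (-u)) (-F (Φ x (-s))) s := by
  have h1 : HasDerivAt (fun u : ℝ => -u) (-1) s := hasDerivAt_neg s
  simpa [Function.comp_def] using (hΦ' x (-s)).scomp s h1

private lemma flow_dist (hF : LipschitzWith κ F) (hΦ0 : ∀ x, Φ x 0 = x)
    (hΦ' : ∀ x s, HasDerivAt (Φ x) (F (Φ x s)) s) (x y : Fin N → ℝ) (t : ℝ) :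
    dist (Φ x t) (Φ y t) ≤ dist x y * Real.exp (κ * |t|) := by
  rcases le_total 0 t with ht | ht
  · have := dist_le_of_trajectories_ODE (v := fun _ => F) (fun _ => hF)
      (f := Φ x) (g := Φ y) (a := 0) (b := t) (δ := dist x y)
      (fun u _ => (hΦ' x u).continuousAt.continuousWithinAt)
      (fun u _ => (hΦ' x u).hasDerivWithinAt)
      (fun u _ => (hΦ' y u).continuousAt.continuousWithinAt)
      (fun u _ => (hΦ' y u).hasDerivWithinAt)
      (by simp [hΦ0]) t ⟨ht, le_rfl⟩
    simpa [abs_of_nonneg ht] using this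
  · have hFneg : LipschitzWith κ (fun z => -F z) := fun a b => by
      simpa [edist_neg_neg] using hF a b
    have := dist_le_of_trajectories_ODE (v := fun _ z => -F z) (fun _ => hFneg)
      (f := fun u => Φ x (-u)) (g := fun u => Φ y (-u)) (a := 0) (b := -t) (δ := dist x y)
      (fun u _ => (flow_rev_deriv hΦ' x u).continuousAt.continuousWithinAt)
      (fun u _ => (flow_rev_deriv hΦ' x u).hasDerivWithinAt)
      (fun u _ => (flow_rev_deriv hΦ' y u).continuousAt.continuousWithinAt)
      (fun u _ => (flow_rev_deriv hΦ' y u).hasDerivWithinAt)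
      (by simp [hΦ0]) (-t) ⟨by linarith, le_rfl⟩
    simpa [abs_of_nonpos ht] using this

private lemma flow_cont (hF : LipschitzWith κ F) (hΦ0 : ∀ x, Φ x 0 = x)
    (hΦ' : ∀ x s, HasDerivAt (Φ x) (F (Φ x s)) s) :
    Continuous fun p : (Fin N → ℝ) × ℝ => Φ p.1 p.2 := by
  rw [continuous_iff_continuousAt]
  rintro ⟨x₀, t₀⟩
  have hcg : Continuous fun p : (Fin N → ℝ) × ℝ =>
      dist p.1 x₀ * Real.exp (κ * |p.2|) + dist (Φ x₀ p.2) (Φ x₀ t₀) := by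
    have hc : Continuous (Φ x₀) := by
      rw [continuous_iff_continuousAt]; exact fun s => (hΦ' x₀ s).continuousAt
    fun_prop
  have hg0 : Tendsto (fun p : (Fin N → ℝ) × ℝ =>
      dist p.1 x₀ * Real.exp (κ * |p.2|) + dist (Φ x₀ p.2) (Φ x₀ t₀))
      (𝓝 (x₀, t₀)) (𝓝 0) := by
    have := hcg.tendsto (x₀, t₀)
    simpa using this
  have : Tendsto (fun p : (Fin N → ℝ) × ℝ => dist (Φ p.1 p.2) (Φ x₀ t₀))
      (𝓝 (x₀, t₀)) (𝓝 0) := by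
    refine squeeze_zero (fun p => dist_nonneg) (fun p => ?_) hg0
    calc dist (Φ p.1 p.2) (Φ x₀ t₀) ≤ dist (Φ p.1 p.2) (Φ x₀ p.2) + dist (Φ x₀ p.2) (Φ x₀ t₀) :=
          dist_triangle _ _ _
      _ ≤ dist p.1 x₀ * Real.exp (κ * |p.2|) + dist (Φ x₀ p.2) (Φ x₀ t₀) := by
          gcongr; exact flow_dist hF hΦ0 hΦ' _ _ _
  exact tendsto_iff_dist_tendsto_zero.2 this

end flowAux

section tauAux
variable {N : ℕ} {Ω : Set (Fin N → ℝ)} {Φ : (Fin N → ℝ) → ℝ → (Fin N → ℝ)}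
  {x : Fin N → ℝ}

lemma tauM_eq_tauP_rev (x : Fin N → ℝ) :
    tauM Ω Φ x = tauP Ω (fun y s => Φ y (-s)) x := rfl

lemma tauP_le_ofReal {r : ℝ} (hr : 0 < r) (h : Φ x r ∉ Ω) :
    tauP Ω Φ x ≤ ENNReal.ofReal r := sInf_le ⟨r, hr, rfl, h⟩

lemma stay_of_lt_tauP (hΦ0 : ∀ x, Φ x 0 = x) {r : ℝ} (hx : x ∈ Ω) (hr : 0 ≤ r)
    (h : ENNReal.ofReal r < tauP Ω Φ x) : Φ x r ∈ Ω := by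
  rcases eq_or_lt_of_le hr with hr0 | hr0
  · rwa [← hr0, hΦ0]
  · by_contra hout
    exact absurd (tauP_le_ofReal hr0 hout) (not_le.2 h)

lemma tauP_gt (hΩ : IsOpen Ω) (hcx : Continuous (Φ x)) {t : ℝ} (ht : 0 ≤ t)
    (h : ∀ r ∈ Icc 0 t, Φ x r ∈ Ω) : ENNReal.ofReal t < tauP Ω Φ x := by
  have hU : IsOpen ((Φ x) ⁻¹' Ω) := hΩ.preimage hcx
  have htU : t ∈ (Φ x) ⁻¹' Ω := h t ⟨ht, le_rfl⟩
  obtain ⟨ε, εpos, hball⟩ := Metric.isOpen_iff.1 hU t htU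
  have hle : ENNReal.ofReal (t + ε/2) ≤ tauP Ω Φ x := by
    refine le_sInf ?_
    rintro b ⟨r, hr, rfl, hout⟩
    refine ENNReal.ofReal_le_ofReal ?_
    by_contra hlt
    push_neg at hlt
    have hrIcc : r ∉ Icc 0 t := fun hrI => hout (h r hrI)
    have hrt : t < r := by
      rcases lt_or_ge t r with h' | h'
      · exact h'
      · exact absurd ⟨hr.le, h'⟩ hrIcc
    have : r ∈ Metric.ball t ε := by
      rw [Real.ball_eq_Ioo]
      exact ⟨by linarith, by linarith⟩
    exact hout (hball this)
  calc ENNReal.ofReal t < ENNReal.ofReal (t + ε/2) := by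
        rw [ENNReal.ofReal_lt_ofReal_iff (by linarith)]; linarith
    _ ≤ tauP Ω Φ x := hle

lemma tauP_pos (hΩ : IsOpen Ω) (hΦ0 : ∀ x, Φ x 0 = x) (hcx : Continuous (Φ x))
    (hx : x ∈ Ω) : 0 < tauP Ω Φ x := by
  have := tauP_gt hΩ hcx (t := 0) le_rfl (by
    intro r hr
    have : r = 0 := le_antisymm hr.2 hr.1
    rwa [this, hΦ0])
  simpa using this

lemma charP (hΩ : IsOpen Ω) (hΦ0 : ∀ x, Φ x 0 = x) (hcx : Continuous (Φ x)) {t : ℝ}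
    (ht : 0 ≤ t) :
    (x ∈ Ω ∧ ENNReal.ofReal t < tauP Ω Φ x) ↔ ∀ r ∈ Icc 0 t, Φ x r ∈ Ω := by
  constructor
  · rintro ⟨hx, hlt⟩ r hr
    exact stay_of_lt_tauP hΦ0 hx hr.1 (lt_of_le_of_lt (ENNReal.ofReal_le_ofReal hr.2) hlt)
  · intro h
    exact ⟨by simpa [hΦ0] using h 0 ⟨le_rfl, ht⟩, tauP_gt hΩ hcx ht h⟩

lemma exitP (hΩ : IsOpen Ω) (hΦ0 : ∀ x, Φ x 0 = x) (hcx : Continuous (Φ x))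
    (hx : x ∈ Ω) (hfin : tauP Ω Φ x ≠ ⊤) : Φ x (tauP Ω Φ x).toReal ∉ Ω := by
  intro h
  set t := (tauP Ω Φ x).toReal with htdef
  have ht0 : 0 ≤ t := ENNReal.toReal_nonneg
  have hall : ∀ r ∈ Icc 0 t, Φ x r ∈ Ω := by
    rintro r ⟨hr0, hrt⟩
    rcases eq_or_lt_of_le hrt with h' | h'
    · rwa [h']
    · refine stay_of_lt_tauP hΦ0 hx hr0 ?_
      calc ENNReal.ofReal r < ENNReal.ofReal t := by
            rw [ENNReal.ofReal_lt_ofReal_iff (lt_of_le_of_lt hr0 h')]; exact h'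
        _ ≤ tauP Ω Φ x := ENNReal.ofReal_toReal_le
  have := tauP_gt hΩ hcx ht0 hall
  rw [ENNReal.ofReal_toReal hfin] at this
  exact lt_irrefl _ this

lemma isOpen_stay_set (hΩ : IsOpen Ω)
    (hcont : Continuous fun p : (Fin N → ℝ) × ℝ => Φ p.1 p.2) (q : ℝ) :
    IsOpen {x : Fin N → ℝ | ∀ r ∈ Icc (0:ℝ) q, Φ x r ∈ Ω} := by
  rw [isOpen_iff_forall_mem_open]
  intro x₀ hx₀
  have hsub : {x₀} ×ˢ Icc (0:ℝ) q ⊆ (fun p : (Fin N → ℝ) × ℝ => Φ p.1 p.2) ⁻¹' Ω := by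
    rintro ⟨x, r⟩ ⟨hx, hr⟩
    simp only [mem_singleton_iff] at hx
    subst hx
    exact hx₀ r hr
  obtain ⟨u, v, hu, hv, hxu, hIv, huv⟩ := generalized_tube_lemma isCompact_singleton
    isCompact_Icc (hΩ.preimage hcont) hsub
  refine ⟨u, ?_, hu, hxu rfl⟩
  intro x hx r hr
  exact huv (Set.mk_mem_prod hx (hIv hr))

lemma DP_eq_iUnion (hΩ : IsOpen Ω) (hΦ0 : ∀ x, Φ x 0 = x)
    (hcont : Continuous fun p : (Fin N → ℝ) × ℝ => Φ p.1 p.2) :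
    {p : (Fin N → ℝ) × ℝ | 0 < p.2 ∧ p.1 ∈ Ω ∧ ENNReal.ofReal p.2 < tauP Ω Φ p.1}
      = ⋃ q : ℚ, {x : Fin N → ℝ | ∀ r ∈ Icc (0:ℝ) q, Φ x r ∈ Ω} ×ˢ Ioo (0:ℝ) q := by
  ext ⟨x, s⟩
  simp only [mem_setOf_eq, mem_iUnion, mem_prod, mem_Ioo]
  constructor
  · rintro ⟨hs, hx, hlt⟩
    have hcx : Continuous (Φ x) := hcont.comp (Continuous.prodMk_right x)
    rcases eq_or_ne (tauP Ω Φ x) ⊤ with htop | htop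
    · obtain ⟨q, hq⟩ := exists_rat_gt s
      refine ⟨q, ?_, hs, hq⟩
      intro r hr
      rcases eq_or_lt_of_le hr.1 with h0 | h0
      · rw [← h0, hΦ0]; exact hx
      · by_contra hout
        have := tauP_le_ofReal h0 hout
        rw [htop] at this
        exact absurd (le_antisymm le_top this) (by simp)
    · have hst : s < (tauP Ω Φ x).toReal := by
        have := ENNReal.ofReal_toReal htop
        rw [← this, ENNReal.ofReal_lt_ofReal_iff_of_nonneg hs.le] at hlt
        exact hlt
      obtain ⟨q, hq1, hq2⟩ := exists_rat_btwn hst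
      refine ⟨q, ?_, hs, hq1⟩
      intro r hr
      rcases eq_or_lt_of_le hr.1 with h0 | h0
      · rw [← h0, hΦ0]; exact hx
      · refine stay_of_lt_tauP hΦ0 hx hr.1 ?_
        calc ENNReal.ofReal r ≤ ENNReal.ofReal q := ENNReal.ofReal_le_ofReal hr.2
          _ < ENNReal.ofReal (tauP Ω Φ x).toReal := by
              rw [ENNReal.ofReal_lt_ofReal_iff (lt_trans hs hst)]
              exact hq2
          _ = tauP Ω Φ x := ENNReal.ofReal_toReal htop
  · rintro ⟨q, hV, hs0, hsq⟩
    have hcx : Continuous (Φ x) := hcont.comp (Continuous.prodMk_right x)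
    have hq0 : (0:ℝ) ≤ q := le_of_lt (lt_trans hs0 hsq)
    obtain ⟨hx, hlt⟩ := (charP hΩ hΦ0 hcx hq0).2 hV
    refine ⟨hs0, hx, lt_of_le_of_lt (ENNReal.ofReal_le_ofReal hsq.le) hlt⟩

lemma isOpen_DP (hΩ : IsOpen Ω) (hΦ0 : ∀ x, Φ x 0 = x)
    (hcont : Continuous fun p : (Fin N → ℝ) × ℝ => Φ p.1 p.2) :
    IsOpen {p : (Fin N → ℝ) × ℝ | 0 < p.2 ∧ p.1 ∈ Ω ∧ ENNReal.ofReal p.2 < tauP Ω Φ p.1} := by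
  rw [DP_eq_iUnion hΩ hΦ0 hcont]
  exact isOpen_iUnion fun q => (isOpen_stay_set hΩ hcont q).prod isOpen_Ioo

lemma key_equiv (hΩ : IsOpen Ω) (hΦ0 : ∀ x, Φ x 0 = x)
    (hcont : Continuous fun p : (Fin N → ℝ) × ℝ => Φ p.1 p.2)
    (hgroup : ∀ x s t, Φ (Φ x s) t = Φ x (s + t)) {s : ℝ} (hs : 0 ≤ s) :
    (Φ x s ∈ Ω ∧ ENNReal.ofReal s < tauM Ω Φ (Φ x s)) ↔
      (x ∈ Ω ∧ ENNReal.ofReal s < tauP Ω Φ x) := by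
  have hcx : Continuous (Φ x) := hcont.comp (Continuous.prodMk_right x)
  have hcxs : Continuous fun r => Φ (Φ x s) (-r) :=
    (hcont.comp (Continuous.prodMk_right (Φ x s))).comp continuous_neg
  have h0r : ∀ y : Fin N → ℝ, (fun r => Φ y (-r)) 0 = y := by
    intro y; simp [hΦ0]
  rw [tauM_eq_tauP_rev]
  rw [charP (Φ := fun y r => Φ y (-r)) hΩ h0r hcxs hs, charP hΩ hΦ0 hcx hs]
  constructor
  · intro h r hr
    have := h (s - r) ⟨by linarith [hr.2], by linarith [hr.1]⟩
    rwa [hgroup, show s + -(s - r) = r by ring] at this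
  · intro h r hr
    rw [hgroup, show s + -r = s - r by ring]
    exact h (s - r) ⟨by linarith [hr.2], by linarith [hr.1]⟩

end tauAux



section measAux
variable {N : ℕ} {Φ : (Fin N → ℝ) → ℝ → (Fin N → ℝ)}

private lemma map_flow (μ : Measure (Fin N → ℝ)) (hΦ0 : ∀ x, Φ x 0 = x)
    (hgroup : ∀ x s t, Φ (Φ x s) t = Φ x (s + t))
    (hmeas : ∀ t, Measurable fun x => Φ x t)
    (hinv : ∀ (A : Set (Fin N → ℝ)) (t : ℝ), MeasurableSet A →
      μ ((fun x => Φ x t) '' A) = μ A) (t : ℝ) :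
    μ.map (fun x => Φ x t) = μ := by
  refine Measure.ext fun A hA => ?_
  rw [Measure.map_apply (hmeas t) hA]
  have himg : (fun x => Φ x t) ⁻¹' A = (fun x => Φ x (-t)) '' A := by
    ext z
    constructor
    · intro hz
      exact ⟨Φ z t, hz, by show Φ (Φ z t) (-t) = z; rw [hgroup]; simp [hΦ0]⟩
    · rintro ⟨a, ha, rfl⟩
      show Φ (Φ a (-t)) t ∈ A
      rw [hgroup]; simpa [hΦ0] using ha
  rw [himg, hinv A (-t) hA]

private lemma T_pres (μ : Measure (Fin N → ℝ)) [SigmaFinite μ] (hΦ0 : ∀ x, Φ x 0 = x)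
    (hgroup : ∀ x s t, Φ (Φ x s) t = Φ x (s + t))
    (hcont : Continuous fun p : (Fin N → ℝ) × ℝ => Φ p.1 p.2)
    (hinv : ∀ (A : Set (Fin N → ℝ)) (t : ℝ), MeasurableSet A →
      μ ((fun x => Φ x t) '' A) = μ A) :
    MeasurePreserving (fun p : (Fin N → ℝ) × ℝ => (Φ p.1 (-p.2), p.2))
      (μ.prod volume) (μ.prod volume) := by
  have hmeas : ∀ t, Measurable fun x => Φ x t := fun t =>
    (hcont.comp (continuous_id.prodMk continuous_const)).measurable
  have hTcont : Continuous fun p : (Fin N → ℝ) × ℝ => (Φ p.1 (-p.2), p.2) :=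
    (hcont.comp (continuous_fst.prodMk continuous_snd.neg)).prodMk continuous_snd
  refine ⟨hTcont.measurable, ?_⟩
  refine (Measure.prod_eq (μ := μ) (ν := (volume : Measure ℝ)) fun A B hA hB => ?_).symm
  rw [Measure.map_apply hTcont.measurable (hA.prod hB)]
  have hS : MeasurableSet ((fun p : (Fin N → ℝ) × ℝ => (Φ p.1 (-p.2), p.2)) ⁻¹' A ×ˢ B) :=
    hTcont.measurable (hA.prod hB)
  rw [Measure.prod_apply_symm hS]
  have hslice : ∀ s : ℝ, μ ((fun x => (x, s)) ⁻¹'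
      ((fun p : (Fin N → ℝ) × ℝ => (Φ p.1 (-p.2), p.2)) ⁻¹' A ×ˢ B))
      = B.indicator (fun _ => μ A) s := by
    intro s
    by_cases hs : s ∈ B
    · have : ((fun x => (x, s)) ⁻¹'
          ((fun p : (Fin N → ℝ) × ℝ => (Φ p.1 (-p.2), p.2)) ⁻¹' A ×ˢ B))
          = (fun x => Φ x (-s)) ⁻¹' A := by
        ext z; simp [hs]
      rw [this, ← Measure.map_apply (hmeas (-s)) hA,
        map_flow μ hΦ0 hgroup hmeas hinv (-s), indicator_of_mem hs]
    · have : ((fun x => (x, s)) ⁻¹'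
          ((fun p : (Fin N → ℝ) × ℝ => (Φ p.1 (-p.2), p.2)) ⁻¹' A ×ˢ B)) = ∅ := by
        ext z; simp [hs]
      rw [this, indicator_of_notMem hs]
      simp
  simp_rw [hslice]
  rw [lintegral_indicator hB]
  simp [Measure.restrict_apply, mul_comm]

private def Thom (Φ : (Fin N → ℝ) → ℝ → (Fin N → ℝ)) (hΦ0 : ∀ x, Φ x 0 = x)
    (hgroup : ∀ x s t, Φ (Φ x s) t = Φ x (s + t))
    (hcont : Continuous fun p : (Fin N → ℝ) × ℝ => Φ p.1 p.2) :
    Homeomorph ((Fin N → ℝ) × ℝ) ((Fin N → ℝ) × ℝ) where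
  toFun := fun p => (Φ p.1 (-p.2), p.2)
  invFun := fun p => (Φ p.1 p.2, p.2)
  left_inv := by
    rintro ⟨x, s⟩
    simp only
    rw [hgroup]
    simp [hΦ0]
  right_inv := by
    rintro ⟨x, s⟩
    simp only
    rw [hgroup]
    simp [hΦ0]
  continuous_toFun :=
    (hcont.comp (continuous_fst.prodMk continuous_snd.neg)).prodMk continuous_snd
  continuous_invFun :=
    (hcont.comp (continuous_fst.prodMk continuous_snd)).prodMk continuous_snd

end measAux


section ibpAux

private lemma cont_zero_left {ρ : ℝ → ℝ} (hc : Continuous ρ) {t : ℝ}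
    (h : ∀ s, s < t → ρ s = 0) : ρ t = 0 := by
  have h1 : Tendsto ρ (𝓝[<] t) (𝓝 (ρ t)) := (hc.tendsto t).mono_left nhdsWithin_le_nhds
  have h2 : Tendsto ρ (𝓝[<] t) (𝓝 0) := by
    refine Tendsto.congr' ?_ tendsto_const_nhds
    exact eventually_nhdsWithin_of_forall fun s hs => (h s hs).symm
  exact tendsto_nhds_unique h1 h2

private lemma cont_zero_right {ρ : ℝ → ℝ} (hc : Continuous ρ) {t : ℝ}
    (h : ∀ s, t < s → ρ s = 0) : ρ t = 0 := by
  have h1 : Tendsto ρ (𝓝[>] t) (𝓝 (ρ t)) := (hc.tendsto t).mono_left nhdsWithin_le_nhds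
  have h2 : Tendsto ρ (𝓝[>] t) (𝓝 0) := by
    refine Tendsto.congr' ?_ tendsto_const_nhds
    exact eventually_nhdsWithin_of_forall fun s hs => (h s hs).symm
  exact tendsto_nhds_unique h1 h2

private lemma S_eq_top {τ : ℝ≥0∞} (h : τ = ⊤) :
    {s : ℝ | 0 < s ∧ ENNReal.ofReal s < τ} = Ioi 0 := by
  ext s; simp [h, mem_Ioi]

private lemma S_eq_ne_top {τ : ℝ≥0∞} (h : τ ≠ ⊤) :
    {s : ℝ | 0 < s ∧ ENNReal.ofReal s < τ} = Ioo 0 τ.toReal := by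
  ext s
  simp only [mem_setOf_eq, mem_Ioo]
  constructor
  · rintro ⟨hs, hlt⟩
    exact ⟨hs, (ENNReal.ofReal_lt_iff_lt_toReal hs.le h).1 hlt⟩
  · rintro ⟨hs, hlt⟩
    exact ⟨hs, (ENNReal.ofReal_lt_iff_lt_toReal hs.le h).2 hlt⟩

private lemma S_measurable (τ : ℝ≥0∞) :
    MeasurableSet {s : ℝ | 0 < s ∧ ENNReal.ofReal s < τ} := by
  rcases eq_or_ne τ ⊤ with h | h
  · rw [S_eq_top h]; exact measurableSet_Ioi
  · rw [S_eq_ne_top h]; exact measurableSet_Ioo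

/-- Core integration by parts along a single characteristic. -/
private lemma ibp_core {φ ψD ρ : ℝ → ℝ} {τ : ℝ≥0∞} {b : ℝ} (hb : 0 < b)
    (hρC : ContDiff ℝ (⊤:ℕ∞) ρ)
    (hρneg : ∀ s, s < 0 → ρ s = 0) (hρb : ∀ s, b < s → ρ s = 0)
    (hd : ∀ s, 0 ≤ s → ENNReal.ofReal s < τ → HasDerivAt φ (ψD s) s)
    (hψDm : Measurable ψD) {CD : ℝ} (hCD : ∀ s, |ψD s| ≤ CD)
    (hvan : τ ≤ ENNReal.ofReal b → τ ≠ ⊤ →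
      ∃ c, 0 < c ∧ c < τ.toReal ∧ ∀ s, c ≤ s → s < τ.toReal → φ s = 0) :
    ∫ s in {s : ℝ | 0 < s ∧ ENNReal.ofReal s < τ}, ρ s * ψD s
      = -∫ s in {s : ℝ | 0 < s ∧ ENNReal.ofReal s < τ}, deriv ρ s * φ s := by
  set S := {s : ℝ | 0 < s ∧ ENNReal.ofReal s < τ} with hSdef
  have hρ0 : ρ 0 = 0 := cont_zero_left hρC.continuous hρneg
  -- get the cutoff point c
  obtain ⟨c, hc0, hcS, hzero1, hzero2, hbdry, hφd⟩ :
      ∃ c, 0 < c ∧ Ioc 0 c ⊆ S ∧ (∀ s ∈ S, c < s → ρ s * ψD s = 0) ∧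
        (∀ s ∈ S, c < s → deriv ρ s * φ s = 0) ∧ ρ c * φ c = 0 ∧
        (∀ s ∈ Icc 0 c, HasDerivAt φ (ψD s) s) := by
    rcases lt_or_ge (ENNReal.ofReal b) τ with hcase | hcase
    · refine ⟨b, hb, ?_, ?_, ?_, ?_, ?_⟩
      · rintro s ⟨hs0, hsb⟩
        exact ⟨hs0, lt_of_le_of_lt (ENNReal.ofReal_le_ofReal hsb) hcase⟩
      · intro s _ hbs
        rw [hρb s hbs, zero_mul]
      · intro s _ hbs
        have : deriv ρ s = 0 := by
          have hev : ρ =ᶠ[𝓝 s] fun _ => (0:ℝ) :=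
            eventually_of_mem (Ioi_mem_nhds hbs) fun u hu => hρb u hu
          rw [hev.deriv_eq, deriv_const]
        rw [this, zero_mul]
      · rw [cont_zero_right hρC.continuous hρb, zero_mul]
      · rintro s ⟨hs0, hsb⟩
        exact hd s hs0 (lt_of_le_of_lt (ENNReal.ofReal_le_ofReal hsb) hcase)
    · have hτtop : τ ≠ ⊤ := fun h => by simp [h] at hcase
      obtain ⟨c, hc0, hct, hφ0⟩ := hvan hcase hτtop
      have hSIoo : S = Ioo 0 τ.toReal := S_eq_ne_top hτtop
      refine ⟨c, hc0, ?_, ?_, ?_, ?_, ?_⟩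
      · rintro s ⟨hs0, hsc⟩
        rw [hSIoo]
        exact ⟨hs0, lt_of_le_of_lt hsc hct⟩
      · intro s hs hcs
        rw [hSIoo] at hs
        have hψD0 : ψD s = 0 := by
          have h1 : HasDerivAt φ (ψD s) s := hd s hs.1.le (by
            rw [hSIoo] at hSdef
            exact (ENNReal.ofReal_lt_iff_lt_toReal hs.1.le hτtop).2 hs.2)
          have hev : φ =ᶠ[𝓝 s] fun _ => (0:ℝ) := by
            refine eventually_of_mem (Ioo_mem_nhds hcs hs.2) fun u hu => ?_
            exact hφ0 u hu.1.le hu.2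
          have h2 : HasDerivAt φ 0 s := by
            rw [hev.hasDerivAt_iff]
            exact hasDerivAt_const s 0
          exact h1.unique h2
        rw [hψD0, mul_zero]
      · intro s hs hcs
        rw [hSIoo] at hs
        rw [hφ0 s hcs.le hs.2, mul_zero]
      · rw [hφ0 c le_rfl hct, mul_zero]
      · rintro s ⟨hs0, hsc⟩
        exact hd s hs0 ((ENNReal.ofReal_lt_iff_lt_toReal hs0 hτtop).2 (lt_of_le_of_lt hsc hct))
  -- reduce both set integrals to Ioc 0 c
  have hSm : MeasurableSet S := S_measurable τ
  have hred : ∀ F : ℝ → ℝ, (∀ s ∈ S, c < s → F s = 0) →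
      ∫ s in S, F s = ∫ s in (0:ℝ)..c, F s := by
    intro F hF
    rw [intervalIntegral.integral_of_le hc0.le]
    rw [← integral_indicator hSm, ← integral_indicator measurableSet_Ioc]
    congr 1
    funext s
    by_cases hs : s ∈ Ioc 0 c
    · rw [indicator_of_mem hs, indicator_of_mem (hcS hs)]
    · rw [indicator_of_notMem hs]
      by_cases hs' : s ∈ S
      · rw [indicator_of_mem hs']
        have : c < s := by
          by_contra hcs
          push_neg at hcs
          exact hs ⟨hs'.1, hcs⟩
        exact hF s hs' this
      · rw [indicator_of_notMem hs']
  rw [hred _ hzero1, hred _ hzero2]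
  -- FTC on [0, c]
  have hφcont : ∀ s ∈ Icc (0:ℝ) c, ContinuousAt φ s := fun s hs => (hφd s hs).continuousAt
  have hderiv : ∀ s ∈ uIcc (0:ℝ) c,
      HasDerivAt (fun u => ρ u * φ u) (deriv ρ s * φ s + ρ s * ψD s) s := by
    intro s hs
    rw [uIcc_of_le hc0.le] at hs
    exact ((hρC.differentiable (by simp)).differentiableAt.hasDerivAt).mul (hφd s hs)
  have hint1 : IntervalIntegrable (fun s => deriv ρ s * φ s) volume 0 c := by
    refine ContinuousOn.intervalIntegrable ?_
    refine ContinuousOn.mul ((hρC.continuous_deriv (by simp)).continuousOn) ?_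
    intro s hs
    rw [uIcc_of_le hc0.le] at hs
    exact (hφcont s hs).continuousWithinAt
  have hint2 : IntervalIntegrable (fun s => ρ s * ψD s) volume 0 c := by
    obtain ⟨Cρ, hCρ⟩ := (isCompact_Icc (a := (0:ℝ)) (b := c)).exists_bound_of_continuousOn
      hρC.continuous.continuousOn
    rw [intervalIntegrable_iff_integrableOn_Ioc_of_le hc0.le]
    refine Measure.integrableOn_of_bounded (M := Cρ * CD) (by simp) ?_ ?_
    · exact (hρC.continuous.measurable.mul hψDm).aestronglyMeasurable
    · refine (ae_restrict_iff' measurableSet_Ioc).2 (ae_of_all _ fun s hs => ?_)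
      have h1 : ‖ρ s‖ ≤ Cρ := hCρ s ⟨hs.1.le, hs.2⟩
      calc ‖ρ s * ψD s‖ = ‖ρ s‖ * |ψD s| := by rw [norm_mul]; rfl
        _ ≤ Cρ * CD := by
            refine mul_le_mul h1 (hCD s) (abs_nonneg _) ?_
            exact le_trans (norm_nonneg _) h1
  have hftc : ∫ s in (0:ℝ)..c, (deriv ρ s * φ s + ρ s * ψD s)
      = ρ c * φ c - ρ 0 * φ 0 :=
    intervalIntegral.integral_eq_sub_of_hasDerivAt hderiv (hint1.add hint2)
  rw [intervalIntegral.integral_add hint1 hint2] at hftc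
  rw [hbdry, hρ0, zero_mul, sub_zero] at hftc
  linarith

end ibpAux


theorem stmt_10
    {N : ℕ} (hN : 1 ≤ N) (κ : ℝ≥0) (hκ : 0 < κ)
    (F : (Fin N → ℝ) → (Fin N → ℝ)) (hF : LipschitzWith κ F)
    (Φ : (Fin N → ℝ) → ℝ → (Fin N → ℝ))
    (hΦ0 : ∀ x, Φ x 0 = x)
    (hΦ' : ∀ x s, HasDerivAt (Φ x) (F (Φ x s)) s)
    (Ω : Set (Fin N → ℝ)) (hΩ : IsOpen Ω)
    (μ : Measure (Fin N → ℝ)) [IsFiniteMeasureOnCompacts μ]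
    (hinv : ∀ (A : Set (Fin N → ℝ)) (t : ℝ), MeasurableSet A →
      μ ((fun x => Φ x t) '' A) = μ A)
    (ρ : ℕ → ℝ → ℝ) (hρ : IsMollifier ρ)
    (f : (Fin N → ℝ) → ℝ) (hf : Integrable f (μ.restrict Ω)) (n : ℕ) :
    InDomTmax Ω Φ μ (moll Ω Φ (ρ n) f)
      (fun x => -(curveInt (fun s => deriv (ρ n) s * f (Φ x (-s))) (tauM Ω Φ x))) := by
  classical
  have hgroup : ∀ x s t, Φ (Φ x s) t = Φ x (s + t) := flow_group hF hΦ0 hΦ'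
  have hcont : Continuous fun p : (Fin N → ℝ) × ℝ => Φ p.1 p.2 := flow_cont hF hΦ0 hΦ'
  have hΩm : MeasurableSet Ω := hΩ.measurableSet
  set Φr : (Fin N → ℝ) → ℝ → (Fin N → ℝ) := fun y s => Φ y (-s) with hΦrdef
  have hΦr0 : ∀ x, Φr x 0 = x := fun x => by simp [Φr, hΦ0]
  have hΦrcont : Continuous fun p : (Fin N → ℝ) × ℝ => Φr p.1 p.2 :=
    hcont.comp (continuous_fst.prodMk continuous_snd.neg)
  have hgroupr : ∀ x s t, Φr (Φr x s) t = Φr x (s + t) := by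
    intro x s t
    show Φ (Φ x (-s)) (-t) = Φ x (-(s+t))
    rw [hgroup]
    ring_nf
  have htauPr : ∀ z, tauP Ω Φr z = tauM Ω Φ z := fun z => rfl
  have htauMr : ∀ z, tauM Ω Φr z = tauP Ω Φ z := by
    intro z
    simp only [tauM, tauP, Φr, neg_neg]
  set DM := {p : (Fin N → ℝ) × ℝ | 0 < p.2 ∧ p.1 ∈ Ω ∧ ENNReal.ofReal p.2 < tauM Ω Φ p.1}
    with hDMdef
  set DP := {p : (Fin N → ℝ) × ℝ | 0 < p.2 ∧ p.1 ∈ Ω ∧ ENNReal.ofReal p.2 < tauP Ω Φ p.1}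
    with hDPdef
  have hDMopen : IsOpen DM := by
    have := isOpen_DP (Φ := Φr) (Ω := Ω) hΩ hΦr0 hΦrcont
    simpa only [htauPr] using this
  have hDPopen : IsOpen DP := isOpen_DP hΩ hΦ0 hcont
  have hDMm : MeasurableSet DM := hDMopen.measurableSet
  have hDPm : MeasurableSet DP := hDPopen.measurableSet
  set T : (Fin N → ℝ) × ℝ → (Fin N → ℝ) × ℝ := fun p => (Φ p.1 (-p.2), p.2) with hTdef
  have hTpres : MeasurePreserving T (μ.prod volume) (μ.prod volume) :=
    T_pres μ hΦ0 hgroup hcont hinv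
  have hTemb : MeasurableEmbedding T :=
    (Thom Φ hΦ0 hgroup hcont).toMeasurableEquiv.measurableEmbedding
  have hmemT : ∀ p : (Fin N → ℝ) × ℝ, T p ∈ DP ↔ p ∈ DM := by
    rintro ⟨x, s⟩
    by_cases hs : 0 < s
    · have hke := key_equiv (Φ := Φr) (x := x) hΩ hΦr0 hΦrcont hgroupr hs.le
      rw [htauMr, htauPr] at hke
      show (0 < s ∧ Φ x (-s) ∈ Ω ∧ ENNReal.ofReal s < tauP Ω Φ (Φ x (-s))) ↔
        (0 < s ∧ x ∈ Ω ∧ ENNReal.ofReal s < tauM Ω Φ x)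
      constructor
      · rintro ⟨-, h1, h2⟩
        exact ⟨hs, (hke.1 ⟨h1, h2⟩).1, (hke.1 ⟨h1, h2⟩).2⟩
      · rintro ⟨-, h1, h2⟩
        exact ⟨hs, (hke.2 ⟨h1, h2⟩).1, (hke.2 ⟨h1, h2⟩).2⟩
    · constructor
      · rintro ⟨h, -, -⟩; exact absurd h hs
      · rintro ⟨h, -, -⟩; exact absurd h hs
  have hDMstay : ∀ p : (Fin N → ℝ) × ℝ, p ∈ DM → Φ p.1 (-p.2) ∈ Ω := by
    rintro ⟨x, s⟩ ⟨hs, hx, hlt⟩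
    exact stay_of_lt_tauP (Φ := Φr) hΦr0 hx hs.le (by rw [htauPr]; exact hlt)
  -- measurable representative of f
  have hfaesm := hf.aestronglyMeasurable
  set f₀ : (Fin N → ℝ) → ℝ := hfaesm.mk f with hf₀def
  have hf₀m : Measurable f₀ := hfaesm.stronglyMeasurable_mk.measurable
  have hff₀ : f =ᵐ[μ.restrict Ω] f₀ := hfaesm.ae_eq_mk
  have hf₀int : Integrable f₀ (μ.restrict Ω) := hf.congr hff₀
  set Z : Set (Fin N → ℝ) := toMeasurable (μ.restrict Ω) {x | f x ≠ f₀ x} ∩ Ω with hZdef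
  have hZm : MeasurableSet Z := (measurableSet_toMeasurable _ _).inter hΩm
  have hZnull : μ Z = 0 := by
    rw [hZdef, ← Measure.restrict_apply (measurableSet_toMeasurable _ _),
      measure_toMeasurable]
    exact hff₀
  have hZf : ∀ y, y ∈ Ω → y ∉ Z → f y = f₀ y := by
    intro y hy hyZ
    by_contra hne
    exact hyZ ⟨subset_toMeasurable _ _ hne, hy⟩
  -- the master null set
  have hmaster : ∀ᵐ x ∂μ, ∀ᵐ s ∂(volume : Measure ℝ), ¬((x, s) ∈ DM ∧ Φ x (-s) ∈ Z) := by
    have hB : (μ.prod volume) (T ⁻¹' (DP ∩ Z ×ˢ (univ : Set ℝ))) = 0 := by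
      rw [hTpres.measure_preimage
        ((hDPm.inter (hZm.prod MeasurableSet.univ)).nullMeasurableSet)]
      refine le_antisymm ?_ zero_le
      calc (μ.prod volume) (DP ∩ Z ×ˢ univ) ≤ (μ.prod volume) (Z ×ˢ univ) :=
            measure_mono inter_subset_right
        _ = 0 := by rw [Measure.prod_prod, hZnull, zero_mul]
    have h1 : ∀ᵐ p ∂(μ.prod (volume : Measure ℝ)), p ∉ T ⁻¹' (DP ∩ Z ×ˢ (univ : Set ℝ)) :=
      measure_eq_zero_iff_ae_notMem.1 hB
    have h2 : ∀ᵐ p : (Fin N → ℝ) × ℝ ∂(μ.prod volume), ¬(p ∈ DM ∧ Φ p.1 (-p.2) ∈ Z) := by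
      filter_upwards [h1] with p hp hc
      exact hp ⟨(hmemT p).2 hc.1, hc.2, mem_univ _⟩
    exact Measure.ae_ae_of_ae_prod h2
  -- slice sets
  set SM : (Fin N → ℝ) → Set ℝ := fun x => {s : ℝ | 0 < s ∧ ENNReal.ofReal s < tauM Ω Φ x}
    with hSMdef
  set SP : (Fin N → ℝ) → Set ℝ := fun x => {s : ℝ | 0 < s ∧ ENNReal.ofReal s < tauP Ω Φ x}
    with hSPdef
  -- inner slice computations
  have innerM : ∀ (w : ℝ → ℝ) (h : (Fin N → ℝ) → ℝ) (g₁ : (Fin N → ℝ) → ℝ),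
      ∀ x ∈ Ω, (∫ s, DM.indicator (fun _ => (1:ℝ)) (x, s) * w s * g₁ (Φ x (-s)) * h x
        ∂(volume : Measure ℝ))
      = (∫ s in SM x, w s * g₁ (Φ x (-s))) * h x := by
    intro w h g₁ x hx
    have hptw : ∀ s, DM.indicator (fun _ => (1:ℝ)) (x, s) * w s * g₁ (Φ x (-s)) * h x
        = (SM x).indicator (fun s => w s * g₁ (Φ x (-s)) * h x) s := by
      intro s
      by_cases hs : s ∈ SM x
      · rw [indicator_of_mem hs, indicator_of_mem (show (x, s) ∈ DM from ⟨hs.1, hx, hs.2⟩)]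
        ring
      · rw [indicator_of_notMem hs,
          indicator_of_notMem (show (x, s) ∉ DM from fun hc => hs ⟨hc.1, hc.2.2⟩)]
        simp
    simp_rw [hptw]
    rw [integral_indicator (S_measurable _)]
    exact integral_mul_const _ _
  have innerP : ∀ (w : ℝ → ℝ) (h : (Fin N → ℝ) → ℝ) (g₁ : (Fin N → ℝ) → ℝ),
      ∀ x ∈ Ω, (∫ s, DP.indicator (fun _ => (1:ℝ)) (x, s) * w s * g₁ x * h (Φ x s)
        ∂(volume : Measure ℝ))
      = (∫ s in SP x, w s * h (Φ x s)) * g₁ x := by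
    intro w h g₁ x hx
    have hptw : ∀ s, DP.indicator (fun _ => (1:ℝ)) (x, s) * w s * g₁ x * h (Φ x s)
        = (SP x).indicator (fun s => w s * h (Φ x s) * g₁ x) s := by
      intro s
      by_cases hs : s ∈ SP x
      · rw [indicator_of_mem hs, indicator_of_mem (show (x, s) ∈ DP from ⟨hs.1, hx, hs.2⟩)]
        ring
      · rw [indicator_of_notMem hs,
          indicator_of_notMem (show (x, s) ∉ DP from fun hc => hs ⟨hc.1, hc.2.2⟩)]
        simp
    simp_rw [hptw]
    rw [integral_indicator (S_measurable _)]
    exact integral_mul_const _ _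
  -- integrability of the product-space integrands
  have intP : ∀ (w : ℝ → ℝ), Integrable w (volume : Measure ℝ) →
      ∀ (h : (Fin N → ℝ) → ℝ), Measurable h → (∃ C, ∀ z, |h z| ≤ C) →
      Integrable (fun p : (Fin N → ℝ) × ℝ =>
        DP.indicator (fun _ => (1:ℝ)) p * w p.2 * f₀ p.1 * h (Φ p.1 p.2)) (μ.prod volume) := by
    rintro w hw h hhm ⟨C, hC⟩
    have heq : (fun p : (Fin N → ℝ) × ℝ =>
        DP.indicator (fun _ => (1:ℝ)) p * w p.2 * f₀ p.1 * h (Φ p.1 p.2))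
        = fun p => (DP.indicator (fun _ => (1:ℝ)) p * h (Φ p.1 p.2))
            * (Ω.indicator f₀ p.1 * w p.2) := by
      funext p
      by_cases hp : p ∈ DP
      · rw [indicator_of_mem hp, indicator_of_mem (show p.1 ∈ Ω from hp.2.1)]
        ring
      · rw [indicator_of_notMem hp]
        simp
    rw [heq]
    refine Integrable.bdd_mul (c := max C 0) (((integrable_indicator_iff hΩm).2 hf₀int).mul_prod hw) ?_ ?_
    · exact ((measurable_const.indicator hDPm).mul
        (hhm.comp hcont.measurable)).aestronglyMeasurable
    · refine Eventually.of_forall fun p => ?_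
      by_cases hp : p ∈ DP
      · rw [indicator_of_mem hp, one_mul, Real.norm_eq_abs]
        exact le_max_of_le_left (hC _)
      · rw [indicator_of_notMem hp, zero_mul, norm_zero]
        exact le_max_right _ _
  -- transport along T
  have hHcomp : ∀ (w : ℝ → ℝ) (h : (Fin N → ℝ) → ℝ), ∀ p : (Fin N → ℝ) × ℝ,
      DP.indicator (fun _ => (1:ℝ)) (T p) * w ((T p).2) * f₀ ((T p).1) * h (Φ (T p).1 (T p).2)
      = DM.indicator (fun _ => (1:ℝ)) p * w p.2 * f₀ (Φ p.1 (-p.2)) * h p.1 := by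
    intro w h p
    have h1 : DP.indicator (fun _ => (1:ℝ)) (T p) = DM.indicator (fun _ => (1:ℝ)) p := by
      by_cases hp : p ∈ DM
      · rw [indicator_of_mem hp, indicator_of_mem ((hmemT p).2 hp)]
      · rw [indicator_of_notMem hp, indicator_of_notMem (fun hc => hp ((hmemT p).1 hc))]
    have h2 : Φ (T p).1 (T p).2 = p.1 := by
      show Φ (Φ p.1 (-p.2)) p.2 = p.1
      rw [hgroup]
      simp [hΦ0]
    rw [h1, h2]
  have intM : ∀ (w : ℝ → ℝ), Integrable w (volume : Measure ℝ) →
      ∀ (h : (Fin N → ℝ) → ℝ), Measurable h → (∃ C, ∀ z, |h z| ≤ C) →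
      Integrable (fun p : (Fin N → ℝ) × ℝ =>
        DM.indicator (fun _ => (1:ℝ)) p * w p.2 * f₀ (Φ p.1 (-p.2)) * h p.1) (μ.prod volume) := by
    intro w hw h hhm hhb
    have h1 : Integrable ((fun p : (Fin N → ℝ) × ℝ =>
        DP.indicator (fun _ => (1:ℝ)) p * w p.2 * f₀ p.1 * h (Φ p.1 p.2)) ∘ T) (μ.prod volume) :=
      (hTpres.integrable_comp_emb hTemb).2 (intP w hw h hhm hhb)
    refine h1.congr (Eventually.of_forall fun p => ?_)
    exact hHcomp w h p
  -- change of variables for the Bochner integral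
  have covPM : ∀ (w : ℝ → ℝ) (h : (Fin N → ℝ) → ℝ),
      (∫ p : (Fin N → ℝ) × ℝ,
          DP.indicator (fun _ => (1:ℝ)) p * w p.2 * f₀ p.1 * h (Φ p.1 p.2) ∂(μ.prod volume))
      = ∫ p : (Fin N → ℝ) × ℝ,
          DM.indicator (fun _ => (1:ℝ)) p * w p.2 * f₀ (Φ p.1 (-p.2)) * h p.1 ∂(μ.prod volume) := by
    intro w h
    rw [← hTpres.integral_comp hTemb (fun p : (Fin N → ℝ) × ℝ =>
      DP.indicator (fun _ => (1:ℝ)) p * w p.2 * f₀ p.1 * h (Φ p.1 p.2))]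
    exact integral_congr_ae (Eventually.of_forall fun p => hHcomp w h p)
  -- Fubini reductions to iterated set integrals
  have prodM : ∀ (w : ℝ → ℝ), Integrable w (volume : Measure ℝ) →
      ∀ (h : (Fin N → ℝ) → ℝ), Measurable h → (∃ C, ∀ z, |h z| ≤ C) →
      (∫ p : (Fin N → ℝ) × ℝ,
          DM.indicator (fun _ => (1:ℝ)) p * w p.2 * f₀ (Φ p.1 (-p.2)) * h p.1 ∂(μ.prod volume))
      = ∫ x in Ω, (∫ s in SM x, w s * f₀ (Φ x (-s))) * h x ∂μ := by
    intro w hw h hhm hhb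
    rw [MeasureTheory.integral_prod _ (intM w hw h hhm hhb)]
    rw [← setIntegral_eq_integral_of_forall_compl_eq_zero (s := Ω) (fun x hx => ?_)]
    · refine setIntegral_congr_fun hΩm fun x hx => ?_
      exact innerM w h f₀ x hx
    · have : ∀ s : ℝ, DM.indicator (fun _ => (1:ℝ)) (x, s) * w s * f₀ (Φ x (-s)) * h x = 0 := by
        intro s
        rw [indicator_of_notMem (show (x, s) ∉ DM from fun hc => hx hc.2.1)]
        simp
      simp_rw [this]
      exact integral_zero _ _
  have prodP : ∀ (w : ℝ → ℝ), Integrable w (volume : Measure ℝ) →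
      ∀ (h : (Fin N → ℝ) → ℝ), Measurable h → (∃ C, ∀ z, |h z| ≤ C) →
      (∫ p : (Fin N → ℝ) × ℝ,
          DP.indicator (fun _ => (1:ℝ)) p * w p.2 * f₀ p.1 * h (Φ p.1 p.2) ∂(μ.prod volume))
      = ∫ x in Ω, (∫ s in SP x, w s * h (Φ x s)) * f₀ x ∂μ := by
    intro w hw h hhm hhb
    rw [MeasureTheory.integral_prod _ (intP w hw h hhm hhb)]
    rw [← setIntegral_eq_integral_of_forall_compl_eq_zero (s := Ω) (fun x hx => ?_)]
    · refine setIntegral_congr_fun hΩm fun x hx => ?_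
      exact innerP w h f₀ x hx
    · have : ∀ s : ℝ, DP.indicator (fun _ => (1:ℝ)) (x, s) * w s * f₀ x * h (Φ x s) = 0 := by
        intro s
        rw [indicator_of_notMem (show (x, s) ∉ DP from fun hc => hx hc.2.1)]
        simp
      simp_rw [this]
      exact integral_zero _ _
  -- mollifier facts
  set b : ℝ := 1 / (n + 1 : ℝ) with hbdef
  have hb : 0 < b := by positivity
  obtain ⟨hρC, hρpos, hρsupp, hρone⟩ := hρ n
  have hρcont : Continuous (ρ n) := hρC.continuous
  have hρ'cont : Continuous (deriv (ρ n)) := hρC.continuous_deriv (by simp)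
  have hρneg : ∀ s, s < 0 → ρ n s = 0 := fun s hs =>
    hρsupp s fun hc => absurd hc.1 (not_le.2 hs)
  have hρgt : ∀ s, b < s → ρ n s = 0 := fun s hs =>
    hρsupp s fun hc => absurd hc.2 (not_le.2 hs)
  have hρ'zero : ∀ s, s ∉ Icc (0:ℝ) b → deriv (ρ n) s = 0 := by
    intro s hs
    simp only [mem_Icc, not_and_or, not_le] at hs
    rcases hs with hs | hs
    · have hev : ρ n =ᶠ[𝓝 s] fun _ => (0:ℝ) :=
        eventually_of_mem (Iio_mem_nhds hs) fun u hu => hρneg u hu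
      rw [hev.deriv_eq, deriv_const]
    · have hev : ρ n =ᶠ[𝓝 s] fun _ => (0:ℝ) :=
        eventually_of_mem (Ioi_mem_nhds hs) fun u hu => hρgt u hu
      rw [hev.deriv_eq, deriv_const]
  have hwint1 : Integrable (ρ n) (volume : Measure ℝ) :=
    hρcont.integrable_of_hasCompactSupport (HasCompactSupport.intro isCompact_Icc hρsupp)
  have hwint2 : Integrable (deriv (ρ n)) (volume : Measure ℝ) :=
    hρ'cont.integrable_of_hasCompactSupport (HasCompactSupport.intro isCompact_Icc hρ'zero)
  -- a.e. replacement of f by f₀ in the inner integrals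
  have haeswap : ∀ (w : ℝ → ℝ), ∀ᵐ x ∂μ.restrict Ω,
      (∫ s in SM x, w s * f (Φ x (-s))) = ∫ s in SM x, w s * f₀ (Φ x (-s)) := by
    intro w
    filter_upwards [ae_restrict_of_ae hmaster, ae_restrict_mem hΩm] with x hx hxΩ
    refine setIntegral_congr_ae (S_measurable _) ?_
    filter_upwards [hx] with s hs hsS
    have hmem : (x, s) ∈ DM := ⟨hsS.1, hxΩ, hsS.2⟩
    have hΦmem : Φ x (-s) ∈ Ω := hDMstay _ hmem
    have hnotZ : Φ x (-s) ∉ Z := fun hc => hs ⟨hmem, hc⟩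
    rw [hZf _ hΦmem hnotZ]
  -- integrability of the mollification
  have hmoll_int : Integrable (moll Ω Φ (ρ n) f) (μ.restrict Ω) := by
    have h1 := (intM (ρ n) hwint1 (fun _ => (1:ℝ)) measurable_const
      ⟨1, fun z => by norm_num⟩).integral_prod_left
    refine (h1.restrict (s := Ω)).congr ?_
    filter_upwards [haeswap (ρ n), ae_restrict_mem hΩm] with x hx hxΩ
    rw [innerM (ρ n) (fun _ => (1:ℝ)) f₀ x hxΩ, mul_one]
    show _ = ∫ s in SM x, ρ n s * f (Φ x (-s))
    rw [hx]
  have hg_int : Integrable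
      (fun x => -(curveInt (fun s => deriv (ρ n) s * f (Φ x (-s))) (tauM Ω Φ x)))
      (μ.restrict Ω) := by
    refine Integrable.neg ?_
    have h1 := (intM (deriv (ρ n)) hwint2 (fun _ => (1:ℝ)) measurable_const
      ⟨1, fun z => by norm_num⟩).integral_prod_left
    refine (h1.restrict (s := Ω)).congr ?_
    filter_upwards [haeswap (deriv (ρ n)), ae_restrict_mem hΩm] with x hx hxΩ
    rw [innerM (deriv (ρ n)) (fun _ => (1:ℝ)) f₀ x hxΩ, mul_one]
    show _ = ∫ s in SM x, deriv (ρ n) s * f (Φ x (-s))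
    rw [hx]
  refine ⟨hmoll_int, hg_int, ?_⟩
  intro ψf ψD htest
  obtain ⟨Cψ, hCψ⟩ := htest.bounded
  obtain ⟨CD, hCD⟩ := htest.boundedD
  have hψm : Measurable ψf := htest.measurable
  have hψDm2 : Measurable ψD := htest.measurableD
  -- integration by parts along each forward characteristic
  have hibp : ∀ y ∈ Ω,
      (∫ s in SP y, ρ n s * ψD (Φ y s)) = -∫ s in SP y, deriv (ρ n) s * ψf (Φ y s) := by
    intro y hy
    have hcy : Continuous (Φ y) := hcont.comp (Continuous.prodMk_right y)
    refine ibp_core (φ := fun s => ψf (Φ y s)) (ψD := fun s => ψD (Φ y s))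
      (τ := tauP Ω Φ y) hb hρC hρneg hρgt ?_ (hψDm2.comp hcy.measurable)
      (CD := CD) (fun s => hCD _) ?_
    · intro s hs0 hslt
      have hmem : Φ y s ∈ Ω := stay_of_lt_tauP hΦ0 hy hs0 hslt
      have hder0 := htest.hasDeriv (Φ y s) hmem
      have h1 : HasDerivAt (fun u : ℝ => u - s) 1 s := by
        simpa using (hasDerivAt_id s).sub_const s
      have h2 := HasDerivAt.scomp_of_eq s hder0 h1 (by simp)
      have heqf : (fun u => ψf (Φ (Φ y s) u)) ∘ (fun u : ℝ => u - s)
          = fun u => ψf (Φ y u) := by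
        funext u
        show ψf (Φ (Φ y s) (u - s)) = ψf (Φ y u)
        rw [hgroup]
        congr 2
        ring
      rw [heqf] at h2
      simpa using h2
    · intro hle hne
      have htpos : 0 < (tauP Ω Φ y).toReal :=
        ENNReal.toReal_pos (tauP_pos hΩ hΦ0 hcy hy).ne' hne
      have hexit : Φ y (tauP Ω Φ y).toReal ∉ Ω := exitP hΩ hΦ0 hcy hy hne
      obtain ⟨K, hKcomp, hKΩ, hKψ⟩ := htest.compact_support
      have hopen : IsOpen ((Φ y) ⁻¹' Kᶜ) := hKcomp.isClosed.isOpen_compl.preimage hcy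
      have hexitK : (tauP Ω Φ y).toReal ∈ (Φ y) ⁻¹' Kᶜ := fun hc => hexit (hKΩ hc)
      obtain ⟨ε, hε, hball⟩ := Metric.isOpen_iff.1 hopen _ hexitK
      refine ⟨max ((tauP Ω Φ y).toReal/2) ((tauP Ω Φ y).toReal - ε/2), ?_, ?_, ?_⟩
      · exact lt_max_of_lt_left (by linarith)
      · exact max_lt (by linarith) (by linarith)
      · intro s hcs hst
        have h1 : (tauP Ω Φ y).toReal - ε/2 ≤ s := le_trans (le_max_right _ _) hcs
        have hsball : s ∈ Metric.ball (tauP Ω Φ y).toReal ε := by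
          rw [Real.ball_eq_Ioo]
          exact ⟨by linarith, by linarith⟩
        exact hKψ _ (hball hsball)
  have E2 : ∫ x in Ω, (∫ s in SM x, ρ n s * f₀ (Φ x (-s))) * ψD x ∂μ
      = ∫ x in Ω, (∫ s in SP x, ρ n s * ψD (Φ x s)) * f₀ x ∂μ := by
    rw [← prodM (ρ n) hwint1 ψD hψDm2 ⟨CD, hCD⟩, ← prodP (ρ n) hwint1 ψD hψDm2 ⟨CD, hCD⟩]
    exact (covPM (ρ n) ψD).symm
  have E7 : ∫ x in Ω, (∫ s in SM x, deriv (ρ n) s * f₀ (Φ x (-s))) * ψf x ∂μ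
      = ∫ x in Ω, (∫ s in SP x, deriv (ρ n) s * ψf (Φ x s)) * f₀ x ∂μ := by
    rw [← prodM (deriv (ρ n)) hwint2 ψf hψm ⟨Cψ, hCψ⟩,
      ← prodP (deriv (ρ n)) hwint2 ψf hψm ⟨Cψ, hCψ⟩]
    exact (covPM (deriv (ρ n)) ψf).symm
  have E5 : ∫ x in Ω, (∫ s in SP x, ρ n s * ψD (Φ x s)) * f₀ x ∂μ
      = -∫ x in Ω, (∫ s in SP x, deriv (ρ n) s * ψf (Φ x s)) * f₀ x ∂μ := by
    rw [← integral_neg]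
    refine setIntegral_congr_fun hΩm fun y hy => ?_
    rw [hibp y hy]
    ring
  have hRHS : ∫ x in Ω, moll Ω Φ (ρ n) f x * ψD x ∂μ
      = ∫ x in Ω, (∫ s in SM x, ρ n s * f₀ (Φ x (-s))) * ψD x ∂μ := by
    refine integral_congr_ae ?_
    filter_upwards [haeswap (ρ n)] with x hx
    show moll Ω Φ (ρ n) f x * ψD x = _
    have hmx : moll Ω Φ (ρ n) f x = ∫ s in SM x, ρ n s * f (Φ x (-s)) := rfl
    rw [hmx, hx]
  have hLHS : ∫ x in Ω,
        -(curveInt (fun s => deriv (ρ n) s * f (Φ x (-s))) (tauM Ω Φ x)) * ψf x ∂μ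
      = -∫ x in Ω, (∫ s in SM x, deriv (ρ n) s * f₀ (Φ x (-s))) * ψf x ∂μ := by
    rw [← integral_neg]
    refine integral_congr_ae ?_
    filter_upwards [haeswap (deriv (ρ n))] with x hx
    have hcx : curveInt (fun s => deriv (ρ n) s * f (Φ x (-s))) (tauM Ω Φ x)
        = ∫ s in SM x, deriv (ρ n) s * f (Φ x (-s)) := rfl
    rw [hcx, hx]
    ring
  show ∫ x in Ω, -(curveInt (fun s => deriv (ρ n) s * f (Φ x (-s))) (tauM Ω Φ x)) * ψf x ∂μ
      = ∫ x in Ω, moll Ω Φ (ρ n) f x * ψD x ∂μ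
  rw [hLHS, hRHS, E2, E5, E7]

end
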